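/- arXiv:1907.05391 — 6 statements merged into one kernel-verified Lean document; each statement's English description precedes it below -/
import Mathlib

section
/- Let L be a natural number and let k : {0,1,…,L} → ℝ be a sequence of nonnegative reals satisfying k_0 = 2^{L+6}·(L+6) and, for every i with 1 ≤ i ≤ L, k_{i-1} = 2·k_i + √(k_i). Then for every i with 0 ≤ i ≤ L one has 2^{L-i+6}·(L-i+6) ≤ k_i ≤ 2^{L-i+6}·(L+6); in particular k_i ≥ 2^6 = 64. -/
/-- Bounds on the backward recursion `k (i-1) = 2 * k i + √(k i)` with
`k 0 = 2^(L+6) * (L+6)`: for every `i ≤ L`,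
`2^(L-i+6) * (L-i+6) ≤ k i ≤ 2^(L-i+6) * (L+6)`, and in particular `k i ≥ 64`. -/
theorem bound_ki (L : ℕ) (k : ℕ → ℝ)
    (hnonneg : ∀ i ≤ L, 0 ≤ k i)
    (h0 : k 0 = 2 ^ (L + 6) * ((L : ℝ) + 6))
    (hrec : ∀ i, 1 ≤ i → i ≤ L → k (i - 1) = 2 * k i + Real.sqrt (k i)) :
    ∀ i ≤ L,
      (2 : ℝ) ^ (L - i + 6) * ((L - i + 6 : ℕ) : ℝ) ≤ k i ∧
      k i ≤ (2 : ℝ) ^ (L - i + 6) * ((L : ℝ) + 6) ∧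
      (64 : ℝ) ≤ k i := by
  have key : ∀ i ≤ L,
      (2 : ℝ) ^ (L - i + 6) * ((L - i + 6 : ℕ) : ℝ) ≤ k i ∧
      k i ≤ (2 : ℝ) ^ (L - i + 6) * ((L : ℝ) + 6) := by
    intro i
    induction i with
    | zero =>
      intro _
      simp only [Nat.sub_zero, h0]
      constructor
      · push_cast; linarith
      · exact le_refl _
    | succ i ih =>
      intro hi1
      have hiL : i ≤ L := Nat.le_of_succ_le hi1
      obtain ⟨hlo, hhi⟩ := ih hiL
      have hrec' : k i = 2 * k (i + 1) + Real.sqrt (k (i + 1)) := by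
        have := hrec (i + 1) (by omega) hi1
        simpa using this
      set m := L - (i + 1) + 6 with hm
      have hEi : L - i + 6 = m + 1 := by omega
      rw [hEi] at hlo hhi
      have hknn : 0 ≤ k (i + 1) := hnonneg _ hi1
      have hsnn := Real.sqrt_nonneg (k (i + 1))
      constructor
      · -- lower bound
        by_contra h
        push_neg at h
        set t : ℝ := (2 : ℝ) ^ m * ((m : ℕ) : ℝ) with ht
        have ht0 : (0 : ℝ) ≤ t := by positivity
        have hmono : k i < 2 * t + Real.sqrt t := by
          have := Real.sqrt_le_sqrt h.le
          rw [hrec']; linarith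
        have hmle : ((m : ℕ) : ℝ) ≤ (2 : ℝ) ^ m := by
          exact_mod_cast (Nat.lt_two_pow_self (n := m)).le
        have hst : Real.sqrt t ≤ (2 : ℝ) ^ m := by
          rw [show (2 : ℝ) ^ m = Real.sqrt (((2 : ℝ) ^ m) ^ 2) by
            rw [Real.sqrt_sq (by positivity)]]
          apply Real.sqrt_le_sqrt
          have hp : (0 : ℝ) < (2 : ℝ) ^ m := by positivity
          nlinarith
        rw [show ((m + 1 : ℕ) : ℝ) = (m : ℝ) + 1 by push_cast; ring, pow_succ] at hlo
        have hp : (0 : ℝ) < (2 : ℝ) ^ m := by positivity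
        nlinarith
      · -- upper bound
        have h2 : 2 * k (i + 1) ≤ k i := by rw [hrec']; linarith
        rw [pow_succ] at hhi
        linarith
  intro i hi
  obtain ⟨hlo, hhi⟩ := key i hi
  refine ⟨hlo, hhi, ?_⟩
  refine le_trans ?_ hlo
  have h6 : 6 ≤ L - i + 6 := by omega
  have h1 : (64 : ℝ) ≤ (2 : ℝ) ^ (L - i + 6) := by
    calc (64 : ℝ) = 2 ^ 6 := by norm_num
      _ ≤ 2 ^ (L - i + 6) := by
        apply pow_le_pow_right₀ (by norm_num) h6
  have h2 : (1 : ℝ) ≤ ((L - i + 6 : ℕ) : ℝ) := by exact_mod_cast (by omega : 1 ≤ L - i + 6)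
  nlinarith
end

section
/- Let n ≥ 1 and let T be an n×n real matrix with nonnegative entries whose every column sums to 1. For ε ∈ (0,1], define the PageRank vector π_ε ∈ ℝ^n by the series π_ε = (ε/n)·Σ_{i=0}^∞ ((1−ε)T)^i 𝟙, where 𝟙 is the all-ones vector. Then for all ε ∈ (0,1] and δ ∈ (0,1], π_{ε·δ}(v) ≥ δ·π_ε(v) for every coordinate v. -/
/-- The PageRank vector with jump probability `ε` of a column-stochastic matrix `T`,
defined via the Taylor series `π_ε = (ε/n) ∑_{i=0}^∞ ((1-ε)T)^i 𝟙`. -/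
noncomputable def pageRankVec (n : ℕ) (T : Matrix (Fin n) (Fin n) ℝ) (ε : ℝ) :
    Fin n → ℝ :=
  fun v => (ε / n) * ∑' i : ℕ, (((1 - ε) • T) ^ i).mulVec (fun _ => (1 : ℝ)) v

/-- Scaling the jump probability by `δ ∈ (0,1]` decreases each PageRank score by a
factor of at most `δ`: `π_{ε·δ}(v) ≥ δ · π_ε(v)` for every coordinate `v`. -/
theorem pageRank_smooth (n : ℕ) (hn : 1 ≤ n) (T : Matrix (Fin n) (Fin n) ℝ)
    (hT : ∀ u v, 0 ≤ T u v) (hcol : ∀ v, ∑ u, T u v = 1)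
    (ε δ : ℝ) (hε0 : 0 < ε) (hε1 : ε ≤ 1) (hδ0 : 0 < δ) (hδ1 : δ ≤ 1) :
    ∀ v, δ * pageRankVec n T ε v ≤ pageRankVec n T (ε * δ) v := by
  intro v
  have hpow : ∀ i : ℕ, (∀ u w, 0 ≤ (T ^ i) u w) ∧ (∀ w, ∑ u, (T ^ i) u w = 1) := by
    intro i
    induction i with
    | zero =>
      refine ⟨fun u w => ?_, fun w => ?_⟩
      · simp only [pow_zero, Matrix.one_apply]
        split <;> norm_num
      · simp [pow_zero, Matrix.one_apply]
    | succ i ih =>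
      refine ⟨fun u w => ?_, fun w => ?_⟩
      · rw [pow_succ, Matrix.mul_apply]
        exact Finset.sum_nonneg fun k _ => mul_nonneg (ih.1 u k) (hT k w)
      · rw [pow_succ]
        simp only [Matrix.mul_apply]
        rw [Finset.sum_comm]
        have : ∀ k : Fin n, ∑ u, (T ^ i) u k * T k w = T k w := by
          intro k
          rw [← Finset.sum_mul, ih.2 k, one_mul]
        simp_rw [this]
        exact hcol w
  set a : ℕ → ℝ := fun i => (T ^ i).mulVec (fun _ => (1 : ℝ)) v with ha
  have ha0 : ∀ i, 0 ≤ a i := by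
    intro i
    have h : a i = ∑ u, (T ^ i) v u := by
      simp [ha, Matrix.mulVec, dotProduct]
    rw [h]
    exact Finset.sum_nonneg fun u _ => (hpow i).1 v u
  have haN : ∀ i, a i ≤ n := by
    intro i
    have : a i = ∑ u, (T ^ i) v u := by
      simp [ha, Matrix.mulVec, dotProduct]
    rw [this]
    calc ∑ u, (T ^ i) v u ≤ ∑ u : Fin n, (1 : ℝ) := by
          refine Finset.sum_le_sum fun u _ => ?_
          calc (T ^ i) v u ≤ ∑ w, (T ^ i) w u :=
                Finset.single_le_sum (fun w _ => (hpow i).1 w u) (Finset.mem_univ v)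
            _ = 1 := (hpow i).2 u
      _ = n := by simp
  have key : ∀ η : ℝ, ∀ i : ℕ, (((1 - η) • T) ^ i).mulVec (fun _ => (1:ℝ)) v
      = (1 - η) ^ i * a i := by
    intro η i
    rw [smul_pow, Matrix.smul_mulVec]
    simp [ha]
  have hsum : ∀ η : ℝ, 0 < η → η ≤ 1 →
      Summable (fun i : ℕ => (1 - η) ^ i * a i) := by
    intro η h0 h1
    have hg : Summable (fun i : ℕ => (1 - η) ^ i * (n : ℝ)) :=
      (summable_geometric_of_lt_one (by linarith) (by linarith)).mul_right _
    refine Summable.of_nonneg_of_le (fun i => mul_nonneg (pow_nonneg (by linarith) i) (ha0 i))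
      (fun i => mul_le_mul_of_nonneg_left (haN i) (pow_nonneg (by linarith) i)) hg
  have hεδ0 : 0 < ε * δ := mul_pos hε0 hδ0
  have hεδ1 : ε * δ ≤ 1 := by nlinarith
  have htle : ∑' i : ℕ, (1 - ε) ^ i * a i ≤ ∑' i : ℕ, (1 - ε * δ) ^ i * a i := by
    refine Summable.tsum_le_tsum (fun i => ?_) (hsum ε hε0 hε1) (hsum (ε * δ) hεδ0 hεδ1)
    refine mul_le_mul_of_nonneg_right (pow_le_pow_left₀ (by linarith) (by nlinarith) i) (ha0 i)
  simp only [pageRankVec]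
  simp_rw [key]
  have hn0 : (0:ℝ) < n := by exact_mod_cast Nat.lt_of_lt_of_le Nat.zero_lt_one hn
  have hS0 : 0 ≤ ∑' i : ℕ, (1 - ε) ^ i * a i :=
    tsum_nonneg fun i => mul_nonneg (pow_nonneg (by linarith) i) (ha0 i)
  calc δ * (ε / n * ∑' i : ℕ, (1 - ε) ^ i * a i)
      = (ε * δ / n) * ∑' i : ℕ, (1 - ε) ^ i * a i := by ring
    _ ≤ (ε * δ / n) * ∑' i : ℕ, (1 - ε * δ) ^ i * a i :=
        mul_le_mul_of_nonneg_left htle (by positivity)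
end

section
/- For all real numbers ε and τ with 0 < ε ≤ 1/2 and 0 < τ ≤ 1/2, and every real n ≥ 1, one has ((1 − ε)/(1 − (1 − τ)·ε))^{9·ln n / ε} ≥ n^{−36·τ}, where the powers are real exponentiation. Equivalently, writing ε' = (1 − τ)·ε, the base satisfies (1 − ε)/(1 − ε') = 1 − τε/(1 − (1 − τ)ε) and the inequality (1 − τε/(1 − (1 − τ)ε))^{9·ln n/ε} ≥ n^{−36τ} holds. -/
open Real

/-! Since `(1 - ε)(1 + 4τε) - (1 - (1 - τ)ε) = τε(3 - 4ε) ≥ 0` for `ε ≤ 3/4`, the base is at least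
`1 / (1 + 4τε) ≥ exp (-4τε)`, and raising `exp (-4τε)` to the power `9 ln n / ε` gives exactly
`n ^ (-36τ)`. -/

lemma exp_neg_le_inv_one_add {x : ℝ} (hx : -1 < x) : exp (-x) ≤ (1 + x)⁻¹ := by
  rw [exp_neg]
  exact inv_anti₀ (by linarith) (by linarith [add_one_le_exp x])

lemma one_sub_div_one_sub_eq {ε τ : ℝ} (h : 1 - (1 - τ) * ε ≠ 0) :
    (1 - ε) / (1 - (1 - τ) * ε) = 1 - τ * ε / (1 - (1 - τ) * ε) := by
  rw [eq_sub_iff_add_eq, ← add_div, div_eq_one_iff_eq h]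
  ring

lemma inv_one_add_le_one_sub_div_one_sub {ε τ : ℝ} (hε0 : 0 ≤ ε) (hε1 : ε ≤ 3 / 4)
    (hτ : 0 ≤ τ) : (1 + 4 * (τ * ε))⁻¹ ≤ (1 - ε) / (1 - (1 - τ) * ε) := by
  have hden : 0 < 1 - (1 - τ) * ε := by nlinarith
  rw [inv_eq_one_div, div_le_div_iff₀ (by positivity) hden]
  nlinarith [mul_nonneg (mul_nonneg hτ hε0) (by linarith : (0 : ℝ) ≤ 3 - 4 * ε)]

lemma exp_neg_le_one_sub_div_one_sub {ε τ : ℝ} (hε0 : 0 ≤ ε) (hε1 : ε ≤ 3 / 4)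
    (hτ : 0 ≤ τ) : exp (-(4 * (τ * ε))) ≤ (1 - ε) / (1 - (1 - τ) * ε) :=
  (exp_neg_le_inv_one_add (by nlinarith [mul_nonneg hτ hε0])).trans (inv_one_add_le_one_sub_div_one_sub hε0 hε1 hτ)

lemma rpow_neg_eq_exp_neg_rpow {ε τ n : ℝ} (hε : ε ≠ 0) (hn : 0 < n) :
    n ^ (-(36 * τ)) = exp (-(4 * (τ * ε))) ^ (9 * log n / ε) := by
  rw [← exp_mul, rpow_def_of_pos hn]
  congr 1
  field_simp
  ring

theorem translate_walk_eps_success_general (ε τ n : ℝ)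
    (hε0 : 0 < ε) (hε1 : ε ≤ 1 / 2) (hτ0 : 0 < τ) (hn : 1 ≤ n) :
    ((n : ℝ) ^ (-(36 * τ)) ≤ ((1 - ε) / (1 - (1 - τ) * ε)) ^ (9 * Real.log n / ε)) ∧
    ((1 - ε) / (1 - (1 - τ) * ε) = 1 - τ * ε / (1 - (1 - τ) * ε)) ∧
    ((n : ℝ) ^ (-(36 * τ)) ≤ (1 - τ * ε / (1 - (1 - τ) * ε)) ^ (9 * Real.log n / ε)) := by
  have hbase : (1 - ε) / (1 - (1 - τ) * ε) = 1 - τ * ε / (1 - (1 - τ) * ε) :=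
    one_sub_div_one_sub_eq (by nlinarith)
  have hbound : n ^ (-(36 * τ)) ≤ ((1 - ε) / (1 - (1 - τ) * ε)) ^ (9 * log n / ε) := by
    rw [rpow_neg_eq_exp_neg_rpow hε0.ne' (by linarith)]
    have hexponent : 0 ≤ 9 * log n / ε := by have := log_nonneg hn; positivity
    exact rpow_le_rpow (exp_pos _).le
      (exp_neg_le_one_sub_div_one_sub hε0.le (by linarith) hτ0.le) hexponent
  exact ⟨hbound, hbase, hbase ▸ hbound⟩

/-- Lower bound on the per-walk success probability of translating a PageRank walk of
length `9 ln n / ε` from jump probability `ε` to jump probability `(1-τ)·ε`: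
`((1-ε)/(1-(1-τ)ε))^{9 ln n / ε} ≥ n^{-36τ}`; moreover the base equals
`1 - τε/(1-(1-τ)ε)` and the corresponding inequality holds in that form as well. -/
theorem translate_walk_eps_success (ε τ n : ℝ)
    (hε0 : 0 < ε) (hε1 : ε ≤ 1 / 2) (hτ0 : 0 < τ) (hτ1 : τ ≤ 1 / 2) (hn : 1 ≤ n) :
    ((n : ℝ) ^ (-(36 * τ)) ≤ ((1 - ε) / (1 - (1 - τ) * ε)) ^ (9 * Real.log n / ε)) ∧
    ((1 - ε) / (1 - (1 - τ) * ε) = 1 - τ * ε / (1 - (1 - τ) * ε)) ∧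
    ((n : ℝ) ^ (-(36 * τ)) ≤ (1 - τ * ε / (1 - (1 - τ) * ε)) ^ (9 * Real.log n / ε)) :=
  translate_walk_eps_success_general ε τ n hε0 hε1 hτ0 hn
end

section
/- Let p ≥ 1 and k ≥ 1 be integers, let n = p + k, and let ε ∈ (0,1). Let T₁ be a p×p real matrix and T₂ a k×p real matrix, both with nonnegative entries, such that for every column index v one has Σ_u (T₁)_{u,v} + Σ_u (T₂)_{u,v} = 1. Let J_{a,b} denote the a×b all-ones matrix and I the k×k identity. Define the n×n block matrices M^s with blocks ((1−ε)T₁ + (ε/n)J_{p,p} , (ε/n)J_{p,k} ; (1−ε)T₂ + (ε/n)J_{k,p} , (1−ε)I + (ε/n)J_{k,k}) and M^r with blocks ((1−ε)T₁ + (ε/n)J_{p,p} , (1/n)J_{p,k} ; (1−ε)T₂ + (ε/n)J_{k,p} , (1/n)J_{k,k}). Suppose π^s = (π₁^s, π₂^s) and π^r = (π₁^r, π₂^r) are entrywise-nonnegative vectors in ℝ^p × ℝ^k whose entries sum to 1 and which satisfy M^s π^s = π^s and M^r π^r = π^r. Writing |x| for the sum of the entries of a vector x, one has π₁^r = (1/(ε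 − ε·|π₁^s| + |π₁^s|))·π₁^s and π₂^r = (1/(1/ε − |π₂^s|/ε + |π₂^s|))·π₂^s. -/
/-- Any fixed point of a strict contraction `(1-ε) P` with `P` column-substochastic
(nonnegative, columns summing to 1) is zero. -/
theorem pagerank_contraction_aux {ι : Type*} [Fintype ι] (P : Matrix ι ι ℝ)
    (hP : ∀ i j, 0 ≤ P i j)
    (hcolP : ∀ j, ∑ i, P i j = 1) (ε : ℝ) (hε0 : 0 < ε) (hε1 : ε < 1)
    (z : ι → ℝ) (hz : ∀ i, z i = (1 - ε) * ∑ j, P i j * z j) : ∀ i, z i = 0 := by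
  have h1 : (0:ℝ) ≤ 1 - ε := by linarith
  have hS : ∑ i, |z i| ≤ (1 - ε) * ∑ i, |z i| := by
    calc ∑ i, |z i| = ∑ i, |(1 - ε) * ∑ j, P i j * z j| := by
          apply Finset.sum_congr rfl; intro i _; rw [← hz i]
      _ ≤ ∑ i, (1 - ε) * ∑ j, P i j * |z j| := by
          apply Finset.sum_le_sum; intro i _
          rw [abs_mul, abs_of_nonneg h1]
          apply mul_le_mul_of_nonneg_left _ h1
          calc |∑ j, P i j * z j| ≤ ∑ j, |P i j * z j| := Finset.abs_sum_le_sum_abs _ _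
            _ = ∑ j, P i j * |z j| := by
                apply Finset.sum_congr rfl; intro j _
                rw [abs_mul, abs_of_nonneg (hP i j)]
      _ = (1 - ε) * ∑ j, (∑ i, P i j) * |z j| := by
          rw [← Finset.mul_sum]; congr 1
          rw [Finset.sum_comm]
          exact Finset.sum_congr rfl fun j _ => (Finset.sum_mul _ _ _).symm
      _ = (1 - ε) * ∑ j, |z j| := by
          congr 1; apply Finset.sum_congr rfl; intro j _; rw [hcolP j, one_mul]
  have hS0 : 0 ≤ ∑ i, |z i| := Finset.sum_nonneg fun i _ => abs_nonneg _
  have hS' : ∑ i, |z i| = 0 := by nlinarith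
  intro i
  have := Finset.sum_eq_zero_iff_of_nonneg (fun i _ => abs_nonneg (z i)) |>.mp hS' i
    (Finset.mem_univ i)
  exact abs_eq_zero.mp this

/-- Relation between the stationary distribution `π^s` of the PageRank matrix `M^s`
of a graph whose `k` dangling vertices are given self-loops, and the stationary
distribution `π^r` of the PageRank matrix `M^r` of the same graph where dangling
vertices instead restart the walk uniformly: writing `|x|` for the sum of entries,
`π₁^r = π₁^s / (ε - ε|π₁^s| + |π₁^s|)` and `π₂^r = π₂^s / (1/ε - |π₂^s|/ε + |π₂^s|)`. -/
theorem dangling_self_loop_vs_restart (p k n : ℕ) (hp : 1 ≤ p) (hk : 1 ≤ k)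
    (hn : n = p + k) (ε : ℝ) (hε0 : 0 < ε) (hε1 : ε < 1)
    (T₁ : Matrix (Fin p) (Fin p) ℝ) (T₂ : Matrix (Fin k) (Fin p) ℝ)
    (hT₁ : ∀ u v, 0 ≤ T₁ u v) (hT₂ : ∀ u v, 0 ≤ T₂ u v)
    (hcol : ∀ v, (∑ u, T₁ u v) + (∑ u, T₂ u v) = 1)
    (π₁s : Fin p → ℝ) (π₂s : Fin k → ℝ) (π₁r : Fin p → ℝ) (π₂r : Fin k → ℝ)
    (hπ₁s0 : ∀ v, 0 ≤ π₁s v) (hπ₂s0 : ∀ v, 0 ≤ π₂s v)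
    (hπ₁r0 : ∀ v, 0 ≤ π₁r v) (hπ₂r0 : ∀ v, 0 ≤ π₂r v)
    (hπs1 : (∑ v, π₁s v) + (∑ v, π₂s v) = 1)
    (hπr1 : (∑ v, π₁r v) + (∑ v, π₂r v) = 1)
    (hMs : (Matrix.fromBlocks
        ((1 - ε) • T₁ + (ε / n) • (Matrix.of fun _ _ => (1 : ℝ)))
        ((ε / n) • (Matrix.of fun _ _ => (1 : ℝ)))
        ((1 - ε) • T₂ + (ε / n) • (Matrix.of fun _ _ => (1 : ℝ)))
        ((1 - ε) • (1 : Matrix (Fin k) (Fin k) ℝ) +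
          (ε / n) • (Matrix.of fun _ _ => (1 : ℝ)))).mulVec
        (Sum.elim π₁s π₂s) = Sum.elim π₁s π₂s)
    (hMr : (Matrix.fromBlocks
        ((1 - ε) • T₁ + (ε / n) • (Matrix.of fun _ _ => (1 : ℝ)))
        ((1 / (n : ℝ)) • (Matrix.of fun _ _ => (1 : ℝ)))
        ((1 - ε) • T₂ + (ε / n) • (Matrix.of fun _ _ => (1 : ℝ)))
        ((1 / (n : ℝ)) • (Matrix.of fun _ _ => (1 : ℝ)))).mulVec
        (Sum.elim π₁r π₂r) = Sum.elim π₁r π₂r) :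
    π₁r = (1 / (ε - ε * (∑ v, π₁s v) + (∑ v, π₁s v))) • π₁s ∧
    π₂r = (1 / (1 / ε - (∑ v, π₂s v) / ε + (∑ v, π₂s v))) • π₂s := by
  have hnpos : (0:ℝ) < n := by
    have : 0 < n := by omega
    exact_mod_cast this
  have hn0 : (n:ℝ) ≠ 0 := ne_of_gt hnpos
  set σ1 := ∑ v, π₁s v with hσ1def
  set σ2 := ∑ v, π₂s v with hσ2def
  set ρ1 := ∑ v, π₁r v with hρ1def
  set ρ2 := ∑ v, π₂r v with hρ2def
  have hσ1nn : 0 ≤ σ1 := Finset.sum_nonneg fun v _ => hπ₁s0 v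
  have hσ2nn : 0 ≤ σ2 := Finset.sum_nonneg fun v _ => hπ₂s0 v
  set d : ℝ := ε + (1 - ε) * σ1 with hddef
  have hdpos : 0 < d := by nlinarith
  have hd0 : d ≠ 0 := ne_of_gt hdpos
  have hd' : d = σ1 + ε * σ2 := by
    have : σ2 = 1 - σ1 := by linarith
    rw [hddef, this]; ring
  -- scalar equations from hMs
  rw [Matrix.fromBlocks_mulVec] at hMs hMr
  have hs1 : ∀ u, (1 - ε) * (∑ v, T₁ u v * π₁s v) + ε / n = π₁s u := by
    intro u
    have h := congrFun hMs (Sum.inl u)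
    simp only [Sum.elim_inl, Sum.elim_inr, Function.comp, Pi.add_apply, Matrix.add_mulVec,
      Matrix.smul_mulVec, Matrix.one_mulVec, Pi.smul_apply, smul_eq_mul,
      Matrix.mulVec, dotProduct, Matrix.of_apply, one_mul] at h
    linear_combination h - (ε / (n:ℝ)) * hπs1
  have hs2 : ∀ u, (1 - ε) * (∑ v, T₂ u v * π₁s v) + ε / n = ε * π₂s u := by
    intro u
    have h := congrFun hMs (Sum.inr u)
    simp only [Sum.elim_inl, Sum.elim_inr, Function.comp, Pi.add_apply, Matrix.add_mulVec,
      Matrix.smul_mulVec, Matrix.one_mulVec, Pi.smul_apply, smul_eq_mul,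
      Matrix.mulVec, dotProduct, Matrix.of_apply, one_mul] at h
    linear_combination h - (ε / (n:ℝ)) * hπs1
  -- scalar equations from hMr
  have hr1 : ∀ u, (1 - ε) * (∑ v, T₁ u v * π₁r v) + (ε / n) * ρ1 + (1 / n) * ρ2 = π₁r u := by
    intro u
    have h := congrFun hMr (Sum.inl u)
    simp only [Sum.elim_inl, Sum.elim_inr, Function.comp, Pi.add_apply, Matrix.add_mulVec,
      Matrix.smul_mulVec, Matrix.one_mulVec, Pi.smul_apply, smul_eq_mul,
      Matrix.mulVec, dotProduct, Matrix.of_apply, one_mul] at h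
    linear_combination h
  have hr2 : ∀ u, (1 - ε) * (∑ v, T₂ u v * π₁r v) + (ε / n) * ρ1 + (1 / n) * ρ2 = π₂r u := by
    intro u
    have h := congrFun hMr (Sum.inr u)
    simp only [Sum.elim_inl, Sum.elim_inr, Function.comp, Pi.add_apply, Matrix.add_mulVec,
      Matrix.smul_mulVec, Matrix.one_mulVec, Pi.smul_apply, smul_eq_mul,
      Matrix.mulVec, dotProduct, Matrix.of_apply, one_mul] at h
    linear_combination h
  -- candidate fixed point
  set a : Fin p → ℝ := fun u => π₁s u / d with hadef
  set b : Fin k → ℝ := fun u => ε * π₂s u / d with hbdef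
  have hsa : ∑ v, a v = σ1 / d := by
    rw [hadef]; simp [Finset.sum_div, hσ1def]
  have hsb : ∑ v, b v = ε * σ2 / d := by
    rw [hbdef]; simp [← Finset.sum_div, ← Finset.mul_sum, hσ2def]
  have hab1 : (∑ v, a v) + (∑ v, b v) = 1 := by
    rw [hsa, hsb, ← add_div, ← hd', div_self hd0]
  have ha : ∀ u, (1 - ε) * (∑ v, T₁ u v * a v) + (ε / n) * (∑ v, a v)
      + (1 / n) * (∑ v, b v) = a u := by
    intro u
    have h1 : ∑ v, T₁ u v * a v = (∑ v, T₁ u v * π₁s v) / d := by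
      rw [Finset.sum_div]; exact Finset.sum_congr rfl fun v _ => by rw [hadef, mul_div_assoc]
    rw [h1, hsa, hsb]
    have : a u = π₁s u / d := rfl
    rw [this]
    linear_combination (1 / d) * hs1 u + (ε / (n:ℝ)) * (1 / d) * hπs1
  have hb : ∀ u, (1 - ε) * (∑ v, T₂ u v * a v) + (ε / n) * (∑ v, a v)
      + (1 / n) * (∑ v, b v) = b u := by
    intro u
    have h1 : ∑ v, T₂ u v * a v = (∑ v, T₂ u v * π₁s v) / d := by
      rw [Finset.sum_div]; exact Finset.sum_congr rfl fun v _ => by rw [hadef, mul_div_assoc]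
    rw [h1, hsa, hsb]
    have : b u = ε * π₂s u / d := rfl
    rw [this]
    linear_combination (1 / d) * hs2 u + (ε / (n:ℝ)) * (1 / d) * hπs1
  -- the difference is a fixed point of the contraction
  set P : Matrix (Fin p ⊕ Fin k) (Fin p ⊕ Fin k) ℝ :=
    Matrix.fromBlocks T₁ (Matrix.of fun _ _ => (1 / n : ℝ)) T₂
      (Matrix.of fun _ _ => (1 / n : ℝ)) with hPdef
  have hPnn : ∀ i j, 0 ≤ P i j := by
    rintro (i | i) (j | j) <;>
      simp [hPdef, Matrix.fromBlocks, hT₁, hT₂, le_of_lt hnpos, one_div_nonneg.mpr]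
  have hPcol : ∀ j, ∑ i, P i j = 1 := by
    rintro (j | j)
    · rw [Fintype.sum_sum_type]
      simp only [hPdef, Matrix.fromBlocks_apply₁₁, Matrix.fromBlocks_apply₂₁]
      exact hcol j
    · rw [Fintype.sum_sum_type]
      simp only [hPdef, Matrix.fromBlocks_apply₁₂, Matrix.fromBlocks_apply₂₂, Matrix.of_apply,
        Finset.sum_const, Finset.card_univ, Fintype.card_fin, nsmul_eq_mul]
      rw [← add_mul]
      field_simp
      exact_mod_cast hn.symm
  set z : Fin p ⊕ Fin k → ℝ := Sum.elim (fun u => π₁r u - a u) (fun u => π₂r u - b u)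
    with hzdef
  have hΔ : (ρ1 - ∑ v, a v) + (ρ2 - ∑ v, b v) = 0 := by
    have := hπr1
    linarith [hab1]
  have hz : ∀ i, z i = (1 - ε) * ∑ j, P i j * z j := by
    rintro (u | u)
    · rw [Fintype.sum_sum_type]
      simp only [hzdef, hPdef, Sum.elim_inl, Sum.elim_inr, Matrix.fromBlocks_apply₁₁,
        Matrix.fromBlocks_apply₁₂, Matrix.of_apply]
      have e1 : ∑ v, T₁ u v * (π₁r v - a v)
          = (∑ v, T₁ u v * π₁r v) - ∑ v, T₁ u v * a v := by
        rw [← Finset.sum_sub_distrib]; exact Finset.sum_congr rfl fun v _ => by ring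
      have e2 : ∑ v, (1 / (n:ℝ)) * (π₂r v - b v) = (1 / n) * (ρ2 - ∑ v, b v) := by
        rw [← Finset.mul_sum, Finset.sum_sub_distrib]
      rw [e1, e2]
      linear_combination (ha u) - (hr1 u) + (ε / (n:ℝ)) * hΔ
    · rw [Fintype.sum_sum_type]
      simp only [hzdef, hPdef, Sum.elim_inl, Sum.elim_inr, Matrix.fromBlocks_apply₂₁,
        Matrix.fromBlocks_apply₂₂, Matrix.of_apply]
      have e1 : ∑ v, T₂ u v * (π₁r v - a v)
          = (∑ v, T₂ u v * π₁r v) - ∑ v, T₂ u v * a v := by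
        rw [← Finset.sum_sub_distrib]; exact Finset.sum_congr rfl fun v _ => by ring
      have e2 : ∑ v, (1 / (n:ℝ)) * (π₂r v - b v) = (1 / n) * (ρ2 - ∑ v, b v) := by
        rw [← Finset.mul_sum, Finset.sum_sub_distrib]
      rw [e1, e2]
      linear_combination (hb u) - (hr2 u) + (ε / (n:ℝ)) * hΔ
  have hz0 := pagerank_contraction_aux P hPnn hPcol ε hε0 hε1 z hz
  -- conclude
  constructor
  · funext u
    have := hz0 (Sum.inl u)
    simp only [hzdef, Sum.elim_inl] at this
    have h1 : π₁r u = π₁s u / d := by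
      have ha' : a u = π₁s u / d := rfl
      linarith [ha' ▸ this]
    rw [h1, Pi.smul_apply, smul_eq_mul]
    rw [show ε - ε * σ1 + σ1 = d from by rw [hddef]; ring]
    ring
  · funext u
    have := hz0 (Sum.inr u)
    simp only [hzdef, Sum.elim_inr] at this
    have h1 : π₂r u = ε * π₂s u / d := by
      have hb' : b u = ε * π₂s u / d := rfl
      linarith [hb' ▸ this]
    rw [h1, Pi.smul_apply, smul_eq_mul]
    have hε0' : ε ≠ 0 := ne_of_gt hε0
    have hde : 1 / ε - σ2 / ε + σ2 = d / ε := by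
      rw [hd']
      have : σ1 = 1 - σ2 := by linarith
      rw [this]
      field_simp
    rw [hde, one_div_div]
    ring
end

section
/- Under the hypotheses of the dangling-vertex theorem (with p ≥ 1, k ≥ 1, n = p + k, ε ∈ (0,1), nonnegative T₁, T₂ with joint column sums 1, and probability vectors π^s = (π₁^s, π₂^s), π^r = (π₁^r, π₂^r) that are stationary for M^s and M^r respectively), every coordinate of π₁^r is at least the corresponding coordinate of π₁^s: π₁^r(v) ≥ π₁^s(v) for all v ∈ {1,…,p}. -/
/-- Under the hypotheses of the dangling-vertex theorem, every coordinate of the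
restart stationary subvector `π₁^r` (on non-dangling vertices) is at least the
corresponding coordinate of the self-loop stationary subvector `π₁^s`. -/
theorem dangling_restart_ge_self_loop (p k n : ℕ) (hp : 1 ≤ p) (hk : 1 ≤ k)
    (hn : n = p + k) (ε : ℝ) (hε0 : 0 < ε) (hε1 : ε < 1)
    (T₁ : Matrix (Fin p) (Fin p) ℝ) (T₂ : Matrix (Fin k) (Fin p) ℝ)
    (hT₁ : ∀ u v, 0 ≤ T₁ u v) (hT₂ : ∀ u v, 0 ≤ T₂ u v)
    (hcol : ∀ v, (∑ u, T₁ u v) + (∑ u, T₂ u v) = 1)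
    (π₁s : Fin p → ℝ) (π₂s : Fin k → ℝ) (π₁r : Fin p → ℝ) (π₂r : Fin k → ℝ)
    (hπ₁s0 : ∀ v, 0 ≤ π₁s v) (hπ₂s0 : ∀ v, 0 ≤ π₂s v)
    (hπ₁r0 : ∀ v, 0 ≤ π₁r v) (hπ₂r0 : ∀ v, 0 ≤ π₂r v)
    (hπs1 : (∑ v, π₁s v) + (∑ v, π₂s v) = 1)
    (hπr1 : (∑ v, π₁r v) + (∑ v, π₂r v) = 1)
    (hMs : (Matrix.fromBlocks
        ((1 - ε) • T₁ + (ε / n) • (Matrix.of fun _ _ => (1 : ℝ)))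
        ((ε / n) • (Matrix.of fun _ _ => (1 : ℝ)))
        ((1 - ε) • T₂ + (ε / n) • (Matrix.of fun _ _ => (1 : ℝ)))
        ((1 - ε) • (1 : Matrix (Fin k) (Fin k) ℝ) +
          (ε / n) • (Matrix.of fun _ _ => (1 : ℝ)))).mulVec
        (Sum.elim π₁s π₂s) = Sum.elim π₁s π₂s)
    (hMr : (Matrix.fromBlocks
        ((1 - ε) • T₁ + (ε / n) • (Matrix.of fun _ _ => (1 : ℝ)))
        ((1 / (n : ℝ)) • (Matrix.of fun _ _ => (1 : ℝ)))
        ((1 - ε) • T₂ + (ε / n) • (Matrix.of fun _ _ => (1 : ℝ)))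
        ((1 / (n : ℝ)) • (Matrix.of fun _ _ => (1 : ℝ)))).mulVec
        (Sum.elim π₁r π₂r) = Sum.elim π₁r π₂r) :
    ∀ v, π₁s v ≤ π₁r v := by

  have hn0 : (0:ℝ) < (n:ℝ) := by
    have h : 0 < n := by omega
    exact_mod_cast h
  -- the self-loop equation on non-dangling coordinates
  have hds : ∀ w, π₁s w = (1-ε) * (∑ u, T₁ w u * π₁s u)
      + (ε/n) * ((∑ u, π₁s u) + (∑ u, π₂s u)) := by
    intro w
    have h := congrFun hMs (Sum.inl w)
    rw [Matrix.fromBlocks_mulVec] at h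
    simp only [Matrix.add_mulVec, Matrix.smul_mulVec, Matrix.mulVec, dotProduct,
      Matrix.of_apply, mul_one, Pi.add_apply, Pi.smul_apply, smul_eq_mul, Sum.elim_inl] at h
    rw [← h]
    simp [Function.comp, Finset.mul_sum]
    rw [mul_add, Finset.mul_sum, Finset.mul_sum, add_assoc]
  -- the restart equation on non-dangling coordinates
  have hdr : ∀ w, π₁r w = (1-ε) * (∑ u, T₁ w u * π₁r u)
      + ((ε/n) * (∑ u, π₁r u) + (1/n) * (∑ u, π₂r u)) := by
    intro w
    have h := congrFun hMr (Sum.inl w)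
    rw [Matrix.fromBlocks_mulVec] at h
    simp only [Matrix.add_mulVec, Matrix.smul_mulVec, Matrix.mulVec, dotProduct,
      Matrix.of_apply, mul_one, Pi.add_apply, Pi.smul_apply, smul_eq_mul, Sum.elim_inl] at h
    rw [← h]
    simp [Function.comp, Finset.mul_sum]
    rw [add_assoc]
  set c : ℝ := (ε/n) * (∑ u, π₁r u) + (1/n) * (∑ u, π₂r u) - ε/n with hc_def
  have hc0 : 0 ≤ c := by
    have hR20 : 0 ≤ ∑ u, π₂r u := Finset.sum_nonneg fun u _ => hπ₂r0 u
    have hR1 : (∑ u, π₁r u) ≤ 1 := by linarith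
    have hnc : (n:ℝ) * c = ε * (∑ u, π₁r u) + (∑ u, π₂r u) - ε := by
      rw [hc_def]; field_simp
    have hpos : 0 ≤ ε * (∑ u, π₁r u) + (∑ u, π₂r u) - ε := by nlinarith
    by_contra hcneg
    push_neg at hcneg
    have : (n:ℝ) * c < 0 := mul_neg_of_pos_of_neg hn0 hcneg
    linarith
  set d : Fin p → ℝ := fun u => π₁r u - π₁s u with hd_def
  have hd : ∀ w, d w = (1-ε) * (∑ u, T₁ w u * d u) + c := by
    intro w
    have h1 := hds w
    have h2 := hdr w
    rw [hπs1, mul_one] at h1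
    have hsplit : (∑ u, T₁ w u * d u)
        = (∑ u, T₁ w u * π₁r u) - (∑ u, T₁ w u * π₁s u) := by
      rw [← Finset.sum_sub_distrib]
      exact Finset.sum_congr rfl fun u _ => by simp [hd_def]; ring
    rw [hsplit, hc_def, mul_sub]
    show π₁r w - π₁s w = _
    linarith
  -- the set of negative coordinates of d
  set N : Finset (Fin p) := Finset.univ.filter (fun u => d u < 0) with hN_def
  have hNempty : N = ∅ := by
    by_contra hne
    have hNne : N.Nonempty := Finset.nonempty_of_ne_empty hne
    have hcolN : ∀ u, (∑ v ∈ N, T₁ v u) ≤ 1 := by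
      intro u
      have h1 : (∑ v ∈ N, T₁ v u) ≤ ∑ v, T₁ v u :=
        Finset.sum_le_sum_of_subset_of_nonneg (Finset.subset_univ N)
          (fun v _ _ => hT₁ v u)
      have h2 : 0 ≤ ∑ v, T₂ v u := Finset.sum_nonneg fun v _ => hT₂ v u
      linarith [hcol u]
    have hcolN0 : ∀ u, 0 ≤ (∑ v ∈ N, T₁ v u) :=
      fun u => Finset.sum_nonneg fun v _ => hT₁ v u
    set s : ℝ := ∑ v ∈ N, d v with hs_def
    have hskey : s ≤ ∑ v ∈ N, ∑ u, T₁ v u * d u := by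
      have hswap : (∑ v ∈ N, ∑ u, T₁ v u * d u)
          = ∑ u, (∑ v ∈ N, T₁ v u) * d u := by
        rw [Finset.sum_comm]
        exact Finset.sum_congr rfl fun u _ => (Finset.sum_mul ..).symm
      have hite : s = ∑ u, (if u ∈ N then d u else 0) := by
        rw [hs_def, Finset.sum_ite_mem, Finset.univ_inter]
      rw [hswap, hite]
      apply Finset.sum_le_sum
      intro u _
      by_cases hu : u ∈ N
      · simp only [hu, if_pos]
        have hdu : d u < 0 := by
          have := hu
          simp only [hN_def, Finset.mem_filter] at this
          exact this.2
        nlinarith [hcolN u, hcolN0 u]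
      · simp only [hu, if_neg, not_false_iff]
        have hdu : 0 ≤ d u := by
          by_contra hx
          push_neg at hx
          exact hu (by simp [hN_def]; linarith)
        have := hcolN0 u
        positivity
    have hsum : s = (1-ε) * (∑ v ∈ N, ∑ u, T₁ v u * d u) + c * N.card := by
      rw [hs_def, Finset.mul_sum]
      rw [Finset.sum_congr rfl fun v (_ : v ∈ N) => hd v]
      rw [Finset.sum_add_distrib, Finset.sum_const, nsmul_eq_mul, mul_comm]
    have hsge : 0 ≤ s := by
      have hcard : (0:ℝ) ≤ c * N.card := mul_nonneg hc0 (Nat.cast_nonneg _)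
      nlinarith [hskey, hsum]
    have hslt : s < 0 := by
      rw [hs_def]
      apply Finset.sum_neg ?_ hNne
      intro v hv
      simp only [hN_def, Finset.mem_filter] at hv
      exact hv.2
    linarith
  intro v
  by_contra hlt
  push_neg at hlt
  have hvN : v ∈ N := by
    simp only [hN_def, Finset.mem_filter, Finset.mem_univ, true_and, hd_def]
    linarith
  rw [hNempty] at hvN
  exact absurd hvN (Finset.notMem_empty v)
end

section
/- There exist constants C ≥ 1 and c > 0 such that the following holds. Let G be a finite simple graph on n vertices with m ≥ 1 edges, let ε ∈ (0,1), and suppose G is ε-far from bipartite. Form a random subgraph G′ of G by keeping each edge of G independently with probability min{1, C·n/(ε·m)}. Then with probability at least 1 − 2^{−c·n}, the graph G′ is ε/2-far from bipartite and has at most (11/10)·C·n/ε edges. -/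
open MeasureTheory

/-- The number of edges of `G` whose two endpoints get the same color under the
2-coloring `f`. -/
noncomputable def monoEdgeCount {n : ℕ} (G : SimpleGraph (Fin n)) (f : Fin n → Bool) : ℕ :=
  {e ∈ G.edgeSet | ∀ a ∈ e, ∀ b ∈ e, f a = f b}.ncard

/-- `G` is `δ`-far from bipartite: for every 2-coloring, at least a `δ` fraction of
the edges are monochromatic (equivalently, at least `δ·m` edges must be removed to
make `G` bipartite). -/
def FarFromBipartite {n : ℕ} (G : SimpleGraph (Fin n)) (δ : ℝ) : Prop :=
  ∀ f : Fin n → Bool, δ * (G.edgeSet.ncard : ℝ) ≤ (monoEdgeCount G f : ℝ)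

/-- The subgraph of `G` obtained by keeping exactly the edges `e` with `κ e = true`. -/
def keepSubgraph {n : ℕ} (G : SimpleGraph (Fin n)) (κ : Sym2 (Fin n) → Bool) :
    SimpleGraph (Fin n) where
  Adj v w := G.Adj v w ∧ κ s(v, w) = true
  symm := by
    constructor
    intro v w h
    refine ⟨G.symm.symm _ _ h.1, ?_⟩
    rw [Sym2.eq_swap]
    exact h.2
  loopless := ⟨fun v h => G.loopless.irrefl v h.1⟩

/-!
Write `X(T)` for the number of sampled edges in a set of edges `T`, `A = (11/10)·C·n/ε`, and
`M_f` for the edges of `G` made monochromatic by a 2-coloring `f`. If `X(E(G)) ≤ A` and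
`X(M_f) ≥ (ε/2)·A` for every `f`, the sample is `ε/2`-far from bipartite and has at most `A`
edges. When `q = C·n/(ε·m) ≤ 1`, the means are `𝔼 X(E(G)) = C·n/ε` and `𝔼 X(M_f) ≥ q·ε·m = C·n`,
so exponential-moment (Chernoff) bounds give `P(X(E(G)) ≥ A) ≤ e^{-2n}` and
`P(X(M_f) ≤ εA/2) ≤ e^{-3n}`, and the union bound over the `2^n ≤ e^n` colorings leaves
`2e^{-2n} ≤ e^{-n}`. When `q = 1` every edge is kept and `G` itself is good.
-/

open MeasureTheory ProbabilityTheory Real Finset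
open scoped NNReal

section BernoulliSampling

noncomputable def bernoulliPi (ι : Type*) [Fintype ι] (q : ℝ≥0) (hq : q ≤ 1) :
    Measure (ι → Bool) :=
  Measure.pi fun _ : ι => (PMF.bernoulli q hq).toMeasure

variable {ι : Type*} [Fintype ι] {q : ℝ≥0} {hq : q ≤ 1}

instance : IsProbabilityMeasure (bernoulliPi ι q hq) := by
  unfold bernoulliPi; infer_instance

lemma mgf_bernoulli (t : ℝ) :
    mgf (fun b : Bool => if b then (1 : ℝ) else 0) (PMF.bernoulli q hq).toMeasure t
      = 1 - q + q * exp t := by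
  simp [mgf, PMF.integral_eq_sum, PMF.bernoulli_apply, NNReal.coe_sub hq]
  ring

lemma mgf_card_filter_bernoulliPi (T : Finset ι) (t : ℝ) :
    mgf (fun κ : ι → Bool => (#{e ∈ T | κ e} : ℝ)) (bernoulliPi ι q hq) t
      = (1 - q + q * exp t) ^ #T := by
  have hsum : (fun κ : ι → Bool => (#{e ∈ T | κ e} : ℝ))
      = ∑ e ∈ T, fun κ : ι → Bool => if κ e then (1 : ℝ) else 0 := by
    ext κ; rw [Finset.sum_apply, natCast_card_filter]
  have hindep : iIndepFun (fun e (κ : ι → Bool) => if κ e then (1 : ℝ) else 0)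
      (bernoulliPi ι q hq) :=
    iIndepFun_pi (X := fun _ (b : Bool) => if b then (1 : ℝ) else 0)
      fun _ => (measurable_of_finite _).aemeasurable
  rw [hsum, hindep.mgf_sum (fun _ => measurable_of_finite _) T]
  refine Finset.prod_eq_pow_card fun e _ => ?_
  have hmap : (bernoulliPi ι q hq).map (fun κ => κ e) = (PMF.bernoulli q hq).toMeasure :=
    (measurePreserving_eval _ e).map_eq
  rw [← mgf_bernoulli (hq := hq), ← hmap]
  exact (mgf_map (X := fun b : Bool => if b then (1 : ℝ) else 0)
    (measurable_pi_apply e).aemeasurable (measurable_of_finite _).aestronglyMeasurable).symm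

lemma mgf_card_filter_bernoulliPi_le (T : Finset ι) (t : ℝ) :
    mgf (fun κ : ι → Bool => (#{e ∈ T | κ e} : ℝ)) (bernoulliPi ι q hq) t
      ≤ exp (q * #T * (exp t - 1)) := by
  rw [mgf_card_filter_bernoulliPi]
  have hbase : 0 ≤ 1 - q + q * exp t := by
    have : (q : ℝ) ≤ 1 := hq
    positivity
  calc (1 - q + q * exp t) ^ #T ≤ exp (q * (exp t - 1)) ^ #T := by
        gcongr; linarith [add_one_le_exp (q * (exp t - 1))]
    _ = _ := by rw [← exp_nat_mul]; ring_nf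

lemma bernoulliPi_upper_tail (T : Finset ι) {t : ℝ} (ht : 0 ≤ t) (a : ℝ) :
    (bernoulliPi ι q hq).real {κ | a ≤ #{e ∈ T | κ e}}
      ≤ exp (-t * a + q * #T * (exp t - 1)) := by
  calc _ ≤ exp (-t * a) * mgf (fun κ => (#{e ∈ T | κ e} : ℝ)) (bernoulliPi ι q hq) t :=
        measure_ge_le_exp_mul_mgf a ht .of_finite
    _ ≤ _ := by
        rw [exp_add]; gcongr; exact mgf_card_filter_bernoulliPi_le T t

lemma bernoulliPi_lower_tail (T : Finset ι) {t : ℝ} (ht : t ≤ 0) (a : ℝ) :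
    (bernoulliPi ι q hq).real {κ | #{e ∈ T | κ e} ≤ a}
      ≤ exp (-t * a + q * #T * (exp t - 1)) := by
  calc _ ≤ exp (-t * a) * mgf (fun κ => (#{e ∈ T | κ e} : ℝ)) (bernoulliPi ι q hq) t :=
        measure_le_le_exp_mul_mgf a ht .of_finite
    _ ≤ _ := by
        rw [exp_add]; gcongr; exact mgf_card_filter_bernoulliPi_le T t

lemma bernoulliPi_one_apply {S : Set (ι → Bool)} (hq1 : q = 1) (hS : (fun _ => true) ∈ S) :
    bernoulliPi ι q hq S = 1 := by
  subst hq1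
  refine le_antisymm prob_le_one ?_
  calc (1 : ENNReal) = bernoulliPi ι 1 hq {fun _ => true} := by
        simp [bernoulliPi, Measure.pi_singleton, PMF.bernoulli_apply]
    _ ≤ _ := measure_mono (Set.singleton_subset_iff.2 hS)

end BernoulliSampling

section KeepSubgraph

variable {n : ℕ} (G : SimpleGraph (Fin n))

lemma mem_edgeSet_keepSubgraph {κ : Sym2 (Fin n) → Bool} {e : Sym2 (Fin n)} :
    e ∈ (keepSubgraph G κ).edgeSet ↔ e ∈ G.edgeSet ∧ κ e = true := by
  induction e using Sym2.ind with
  | _ x y => rfl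

lemma keepSubgraph_true : keepSubgraph G (fun _ => true) = G := by
  ext v w
  simp [keepSubgraph]

lemma FarFromBipartite.mono {H : SimpleGraph (Fin n)} {δ δ' : ℝ} (h : FarFromBipartite H δ)
    (hδ : δ' ≤ δ) : FarFromBipartite H δ' := fun f =>
  (mul_le_mul_of_nonneg_right hδ (Nat.cast_nonneg _)).trans (h f)

variable [DecidableRel G.Adj]

def monoEdges (f : Fin n → Bool) : Finset (Sym2 (Fin n)) :=
  {e ∈ G.edgeFinset | ∀ a ∈ e, ∀ b ∈ e, f a = f b}

lemma ncard_edgeSet_keepSubgraph (κ : Sym2 (Fin n) → Bool) :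
    (keepSubgraph G κ).edgeSet.ncard = #{e ∈ G.edgeFinset | κ e} := by
  rw [← Set.ncard_coe_finset]
  congr 1
  ext e
  simp [mem_edgeSet_keepSubgraph]

lemma monoEdgeCount_keepSubgraph (κ : Sym2 (Fin n) → Bool) (f : Fin n → Bool) :
    monoEdgeCount (keepSubgraph G κ) f = #{e ∈ monoEdges G f | κ e} := by
  rw [monoEdgeCount, ← Set.ncard_coe_finset]
  congr 1
  ext e
  simp only [monoEdges, coe_filter, mem_filter, SimpleGraph.mem_edgeFinset, Set.mem_setOf_eq,
    mem_edgeSet_keepSubgraph]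
  tauto

lemma monoEdgeCount_eq_card (f : Fin n → Bool) : monoEdgeCount G f = #(monoEdges G f) := by
  simpa [keepSubgraph_true] using monoEdgeCount_keepSubgraph G (fun _ => true) f

lemma farFromBipartite_iff_card {δ : ℝ} :
    FarFromBipartite G δ ↔ ∀ f, δ * #G.edgeFinset ≤ #(monoEdges G f) := by
  simp only [FarFromBipartite, monoEdgeCount_eq_card, ← G.coe_edgeFinset, Set.ncard_coe_finset]

lemma compl_setOf_sparsifies_subset {δ A : ℝ} (hδ : 0 ≤ δ) :
    {κ | FarFromBipartite (keepSubgraph G κ) δ ∧ ((keepSubgraph G κ).edgeSet.ncard : ℝ) ≤ A}ᶜ ⊆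
      {κ | A ≤ #{e ∈ G.edgeFinset | κ e}} ∪ ⋃ f, {κ | #{e ∈ monoEdges G f | κ e} ≤ δ * A} := by
  intro κ hκ
  by_contra! hgood
  simp only [Set.mem_union, Set.mem_iUnion, Set.mem_setOf_eq, not_or, not_exists, not_le]
    at hgood
  obtain ⟨hkept, hmono⟩ := hgood
  refine hκ ⟨fun f => ?_, ?_⟩
  · rw [monoEdgeCount_keepSubgraph, ncard_edgeSet_keepSubgraph]
    exact (mul_le_mul_of_nonneg_left hkept.le hδ).trans (hmono f).le
  · rw [ncard_edgeSet_keepSubgraph]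
    exact hkept.le

end KeepSubgraph

lemma ofReal_one_sub_le_of_measureReal_compl_le {Ω : Type*} [MeasurableSpace Ω] {μ : Measure Ω}
    [IsProbabilityMeasure μ] {s : Set Ω} {a : ℝ} (hs : MeasurableSet s) (h : μ.real sᶜ ≤ a) :
    ENNReal.ofReal (1 - a) ≤ μ s := by
  rw [← ofReal_measureReal]
  gcongr
  linarith [probReal_compl_eq_one_sub (μ := μ) hs]

lemma exp_neg_le_two_rpow_neg {x : ℝ} (hx : 0 ≤ x) : exp (-x) ≤ 2 ^ (-x) := by
  rw [rpow_def_of_pos two_pos, exp_le_exp]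
  nlinarith [log_two_lt_d9]

section Sparsification

variable {n : ℕ} {G : SimpleGraph (Fin n)} [DecidableRel G.Adj] {ε C : ℝ} {q : ℝ≥0} {hq : q ≤ 1}

lemma bernoulliPi_real_many_edges_le (hε0 : 0 < ε) (hε1 : ε ≤ 1) (hC : 840 ≤ C)
    (hqm : q * #G.edgeFinset * ε = C * n) :
    (bernoulliPi _ q hq).real {κ | 11 / 10 * C * n / ε ≤ #{e ∈ G.edgeFinset | κ e}}
      ≤ exp (-(2 * n)) := by
  refine (bernoulliPi_upper_tail _ (t := 1 / 22) (by norm_num) _).trans (exp_le_exp.2 ?_)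
  have hexp : exp (1 / 22) ≤ 22 / 21 := by
    have := exp_bound_div_one_sub_of_interval (x := 1 / 22) (by norm_num) (by norm_num)
    norm_num at this ⊢
    linarith
  have hK : q * #G.edgeFinset = C * n / ε := by field_simp; linarith
  have hCn : 840 * n ≤ C * n / ε := by
    rw [le_div_iff₀ hε0]
    nlinarith [(Nat.cast_nonneg n : (0 : ℝ) ≤ n)]
  have hK0 : 0 ≤ C * n / ε := by positivity
  -- With `K = C n / ε`, the exponent is at most `-K/20 + K/21 = -K/420 ≤ -2n`.
  rw [hK, show 11 / 10 * C * n / ε = 11 / 10 * (C * n / ε) by ring]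
  nlinarith [mul_le_mul_of_nonneg_left hexp hK0]

lemma bernoulliPi_real_few_monoEdges_le (hε0 : 0 < ε) (hC : 60 ≤ C) (hG : FarFromBipartite G ε)
    (hqm : q * #G.edgeFinset * ε = C * n) (f : Fin n → Bool) :
    (bernoulliPi _ q hq).real {κ | #{e ∈ monoEdges G f | κ e} ≤ ε / 2 * (11 / 10 * C * n / ε)}
      ≤ exp (-(3 * n)) := by
  refine (bernoulliPi_lower_tail _ (t := -1) (by norm_num) _).trans (exp_le_exp.2 ?_)
  have hexp : exp (-1) ≤ 2 / 5 := by linarith [exp_neg_one_lt_d9]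
  have hmono : C * n ≤ q * #(monoEdges G f) := by
    rw [← hqm, mul_assoc]
    exact mul_le_mul_of_nonneg_left (by linarith [(farFromBipartite_iff_card G).1 hG f]) q.2
  have ha : ε / 2 * (11 / 10 * C * n / ε) = 11 / 20 * C * n := by field_simp; ring
  have hT0 : 0 ≤ (q : ℝ) * #(monoEdges G f) := by positivity
  -- The exponent is at most `(11/20) C n - (3/5) C n = -C n / 20 ≤ -3n`.
  rw [ha]
  nlinarith [mul_le_mul_of_nonneg_left hexp hT0]

lemma bernoulliPi_real_compl_sparsifies_le (hn : 1 ≤ n) (hε0 : 0 < ε) (hε1 : ε ≤ 1)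
    (hC : 840 ≤ C) (hG : FarFromBipartite G ε) (hqm : q * #G.edgeFinset * ε = C * n) :
    (bernoulliPi _ q hq).real {κ | FarFromBipartite (keepSubgraph G κ) (ε / 2) ∧
        ((keepSubgraph G κ).edgeSet.ncard : ℝ) ≤ 11 / 10 * C * n / ε}ᶜ ≤ exp (-n) := by
  set μ := bernoulliPi (Sym2 (Fin n)) q hq
  have h2n : (2 : ℝ) ^ n ≤ exp n := by
    rw [← exp_one_pow]
    exact pow_le_pow_left₀ (by norm_num) (by linarith [add_one_le_exp 1]) n
  have hexpn : 2 ≤ exp n := by linarith [add_one_le_exp n, (Nat.one_le_cast (α := ℝ)).2 hn]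
  calc μ.real _
      ≤ μ.real {κ | 11 / 10 * C * n / ε ≤ #{e ∈ G.edgeFinset | κ e}}
        + ∑ f, μ.real {κ | #{e ∈ monoEdges G f | κ e} ≤ ε / 2 * (11 / 10 * C * n / ε)} :=
      (measureReal_mono (compl_setOf_sparsifies_subset G (by positivity))).trans <|
        (measureReal_union_le _ _).trans (add_le_add le_rfl (measureReal_iUnion_fintype_le _))
    _ ≤ exp (-(2 * n)) + ∑ _f : Fin n → Bool, exp (-(3 * n)) :=
      add_le_add (bernoulliPi_real_many_edges_le hε0 hε1 hC hqm)
        (sum_le_sum fun f _ => bernoulliPi_real_few_monoEdges_le hε0 (by linarith) hG hqm f)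
    _ = exp (-(2 * n)) + 2 ^ n * exp (-(3 * n)) := by simp
    _ ≤ 2 * exp (-(2 * n)) := by
      have : exp n * exp (-(3 * n)) = exp (-(2 * n)) := by rw [← exp_add]; ring_nf
      nlinarith [exp_pos (-(3 * n))]
    _ ≤ exp (-n) := by
      have : exp n * exp (-(2 * n)) = exp (-n) := by rw [← exp_add]; ring_nf
      nlinarith [exp_pos (-(2 * n))]

end Sparsification

/-- There are constants `C ≥ 1` and `c > 0` such that: if `G` is a graph on `n`
vertices with `m ≥ 1` edges which is `ε`-far from bipartite, and `G'` is the random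
subgraph keeping each edge independently with probability `min 1 (C·n/(ε·m))`, then
with probability at least `1 - 2^{-c·n}` the graph `G'` is `ε/2`-far from bipartite
and has at most `(11/10)·C·n/ε` edges. -/
theorem sparsify_far_from_bipartite :
    ∃ C c : ℝ, 1 ≤ C ∧ 0 < c ∧
      ∀ (n : ℕ) (G : SimpleGraph (Fin n)) (ε : ℝ),
        0 < ε → ε < 1 → 1 ≤ G.edgeSet.ncard →
        FarFromBipartite G ε →
        ENNReal.ofReal (1 - (2 : ℝ) ^ (-(c * n)))
          ≤ Measure.pi (fun _ : Sym2 (Fin n) =>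
              (PMF.bernoulli
                  (Real.toNNReal (min 1 (C * n / (ε * G.edgeSet.ncard))))
                  (Real.toNNReal_le_one.mpr (min_le_left _ _))).toMeasure)
            {κ | FarFromBipartite (keepSubgraph G κ) (ε / 2) ∧
                 ((keepSubgraph G κ).edgeSet.ncard : ℝ) ≤ (11 / 10) * C * n / ε} := by
  classical
  refine ⟨840, 1, by norm_num, one_pos, fun n G ε hε0 hε1 hm hG => ?_⟩
  have hn : 1 ≤ n := by
    obtain ⟨e, -⟩ := Set.nonempty_of_ncard_ne_zero (by omega : G.edgeSet.ncard ≠ 0)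
    exact e.inductionOn fun a _ => a.pos
  have hmE : (G.edgeSet.ncard : ℝ) = #G.edgeFinset := by
    rw [← G.coe_edgeFinset, Set.ncard_coe_finset]
  have hεm : 0 < ε * G.edgeSet.ncard := by positivity
  rw [one_mul]
  rcases le_total 1 (840 * n / (ε * G.edgeSet.ncard)) with hx | hx
  · refine (ENNReal.ofReal_le_one.2 (by linarith [rpow_nonneg zero_le_two (-(n : ℝ))])).trans
      (bernoulliPi_one_apply (by simp [hx]) ?_).ge
    constructor
    · rw [keepSubgraph_true]
      exact hG.mono (by linarith)
    · rw [keepSubgraph_true, le_div_iff₀ hε0]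
      rw [one_le_div hεm] at hx
      nlinarith
  · have hqm : (Real.toNNReal (min 1 (840 * n / (ε * G.edgeSet.ncard))) : ℝ)
        * #G.edgeFinset * ε = 840 * n := by
      rw [min_eq_right hx, Real.coe_toNNReal _ (by positivity), ← hmE]
      field_simp
    have h2n := exp_neg_le_two_rpow_neg (Nat.cast_nonneg n)
    exact (ENNReal.ofReal_le_ofReal (by linarith)).trans
      (ofReal_one_sub_le_of_measureReal_compl_le (Set.toFinite _).measurableSet
        (bernoulliPi_real_compl_sparsifies_le hn hε0 hε1.le le_rfl hG hqm))
end
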